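/- If Z_i and Z_j are bounded real random variables such that E[Z_i^a Z_j^b] = E[Z_i^a] E[Z_j^b] for all natural numbers a, b ≥ 1, then Z_i and Z_j are independent. -/

import Mathlib

/-!
Both the joint law of `(Zi, Zj)` and the product of the marginal laws live on the compact box
`[-M, M]²`, and the moment hypothesis says that they have the same mixed moments
`∫ x ^ a * y ^ b`. By Stone–Weierstrass the polynomials in `x, y` are dense in the continuous
functions on the box, and integration against a finite measure is continuous for the sup norm, so
the two laws integrate every bounded continuous function alike; hence they are equal, which is
independence.
-/

open MeasureTheory ProbabilityTheory

namespace ContinuousMap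

variable {X : Type*} [TopologicalSpace X] [CompactSpace X] [MeasurableSpace X] [BorelSpace X]

noncomputable def integralCLM (μ : Measure X) [IsFiniteMeasure μ] : C(X, ℝ) →L[ℝ] ℝ :=
  L1.integralCLM.comp (toLp 1 μ ℝ)

theorem integralCLM_apply (μ : Measure X) [IsFiniteMeasure μ] (f : C(X, ℝ)) :
    integralCLM μ f = ∫ x, f x ∂μ := by
  rw [integralCLM, ContinuousLinearMap.comp_apply, ← L1.integral_eq, L1.integral_eq_integral]
  exact integral_congr_ae (coeFn_toLp μ f)

end ContinuousMap

namespace MeasureTheory.Measure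

theorem ext_of_forall_mem_submonoidClosure_integral_eq {X : Type*} [TopologicalSpace X]
    [CompactSpace X] [HasOuterApproxClosed X] [MeasurableSpace X] [BorelSpace X]
    {μ ν : Measure X} [IsFiniteMeasure μ] [IsFiniteMeasure ν] {S : Set C(X, ℝ)}
    (hS : (Algebra.adjoin ℝ S).SeparatesPoints)
    (h : ∀ f ∈ Submonoid.closure S, ∫ x, f x ∂μ = ∫ x, f x ∂ν) :
    μ = ν := by
  have hdense :
      Dense (Submodule.span ℝ (Submonoid.closure S : Set C(X, ℝ)) : Set C(X, ℝ)) := by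
    rw [← Algebra.adjoin_eq_span, Subalgebra.coe_toSubmodule, dense_iff_closure_eq,
      ← Subalgebra.topologicalClosure_coe,
      ContinuousMap.subalgebra_topologicalClosure_eq_top_of_separatesPoints _ hS, Algebra.coe_top]
  have hint : ContinuousMap.integralCLM μ = ContinuousMap.integralCLM ν :=
    ContinuousLinearMap.ext_on hdense fun f hf => by
      simp only [ContinuousMap.integralCLM_apply, h f hf]
  refine ext_of_forall_integral_eq_of_IsFiniteMeasure fun f => ?_
  simpa only [ContinuousMap.integralCLM_apply, BoundedContinuousFunction.coe_toContinuousMap]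
    using congr($hint f.toContinuousMap)

theorem eq_of_comap_subtype_eq {α : Type*} [MeasurableSpace α] {μ ν : Measure α} {s : Set α}
    (hs : MeasurableSet s) (hμ : ∀ᵐ x ∂μ, x ∈ s) (hν : ∀ᵐ x ∂ν, x ∈ s)
    (h : μ.comap ((↑) : s → α) = ν.comap (↑)) : μ = ν := by
  rw [← restrict_eq_self_of_ae_mem hμ, ← restrict_eq_self_of_ae_mem hν,
    ← map_comap_subtype_coe hs, ← map_comap_subtype_coe hs, h]

theorem ext_of_integral_monomial_eq_of_isCompact {μ ν : Measure (ℝ × ℝ)} [IsFiniteMeasure μ]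
    [IsFiniteMeasure ν] {K : Set (ℝ × ℝ)} (hK : IsCompact K) (hμ : ∀ᵐ p ∂μ, p ∈ K)
    (hν : ∀ᵐ p ∂ν, p ∈ K)
    (h : ∀ a b : ℕ, ∫ p, p.1 ^ a * p.2 ^ b ∂μ = ∫ p, p.1 ^ a * p.2 ^ b ∂ν) :
    μ = ν := by
  have : CompactSpace K := isCompact_iff_compactSpace.mp hK
  refine eq_of_comap_subtype_eq hK.measurableSet hμ hν ?_
  let x : C(K, ℝ) := ⟨fun p => p.1.1, by fun_prop⟩
  let y : C(K, ℝ) := ⟨fun p => p.1.2, by fun_prop⟩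
  refine ext_of_forall_mem_submonoidClosure_integral_eq (S := {x, y}) ?_ ?_
  · intro p q hpq
    by_cases h1 : p.1.1 = q.1.1
    · exact ⟨y, ⟨y, Algebra.subset_adjoin (by simp), rfl⟩,
        fun h2 => hpq (Subtype.ext (Prod.ext h1 h2))⟩
    · exact ⟨x, ⟨x, Algebra.subset_adjoin (by simp), rfl⟩, h1⟩
  · intro f hf
    obtain ⟨a, b, rfl⟩ := (Submonoid.mem_closure_pair x y f).mp hf
    simpa [x, y, integral_subtype_comap hK.measurableSet (fun p : ℝ × ℝ => p.1 ^ a * p.2 ^ b),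
      restrict_eq_self_of_ae_mem hμ, restrict_eq_self_of_ae_mem hν] using h a b

end MeasureTheory.Measure

/-- If `Zi` and `Zj` are bounded real random variables such that
`E[Zi^a * Zj^b] = E[Zi^a] * E[Zj^b]` for all naturals `a, b ≥ 1`,
then `Zi` and `Zj` are independent. -/
theorem stmt_0 {Ω : Type*} [MeasureSpace Ω] [IsProbabilityMeasure (ℙ : Measure Ω)]
    (Zi Zj : Ω → ℝ) (hZi : Measurable Zi) (hZj : Measurable Zj)
    (M : ℝ) (hbi : ∀ᵐ ω ∂(ℙ : Measure Ω), |Zi ω| ≤ M)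
    (hbj : ∀ᵐ ω ∂(ℙ : Measure Ω), |Zj ω| ≤ M)
    (hmom : ∀ a b : ℕ, 1 ≤ a → 1 ≤ b →
      ∫ ω, (Zi ω) ^ a * (Zj ω) ^ b ∂(ℙ : Measure Ω)
        = (∫ ω, (Zi ω) ^ a ∂(ℙ : Measure Ω)) * ∫ ω, (Zj ω) ^ b ∂(ℙ : Measure Ω)) :
    IndepFun Zi Zj ℙ := by
  have hmom_all : ∀ a b : ℕ, ∫ ω, (Zi ω) ^ a * (Zj ω) ^ b
      = (∫ ω, (Zi ω) ^ a) * ∫ ω, (Zj ω) ^ b := by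
    intro a b
    rcases Nat.eq_zero_or_pos a with rfl | ha
    · simp
    rcases Nat.eq_zero_or_pos b with rfl | hb
    · simp
    exact hmom a b ha hb
  have hI : MeasurableSet (Set.Icc (-M) M) := measurableSet_Icc
  have hIi : ∀ᵐ x ∂(Measure.map Zi ℙ), x ∈ Set.Icc (-M) M :=
    (ae_map_iff hZi.aemeasurable hI).mpr (hbi.mono fun _ => abs_le.mp)
  have hIj : ∀ᵐ y ∂(Measure.map Zj ℙ), y ∈ Set.Icc (-M) M :=
    (ae_map_iff hZj.aemeasurable hI).mpr (hbj.mono fun _ => abs_le.mp)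
  have hZ : Measurable fun ω => (Zi ω, Zj ω) := hZi.prodMk hZj
  rw [indepFun_iff_map_prod_eq_prod_map_map hZi.aemeasurable hZj.aemeasurable]
  refine Measure.ext_of_integral_monomial_eq_of_isCompact (isCompact_Icc.prod isCompact_Icc)
    ((ae_map_iff hZ.aemeasurable (hI.prod hI)).mpr ?_)
    ((Measure.ae_prod_mem_iff_ae_ae_mem (hI.prod hI)).mpr
      (hIi.mono fun x hx => hIj.mono fun y hy => ⟨hx, hy⟩)) fun a b => ?_
  · filter_upwards [hbi, hbj] with ω hi hj using ⟨abs_le.mp hi, abs_le.mp hj⟩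
  · rw [integral_map hZ.aemeasurable (by fun_prop),
      integral_prod_mul (fun x : ℝ => x ^ a) (fun y : ℝ => y ^ b),
      integral_map hZi.aemeasurable (by fun_prop), integral_map hZj.aemeasurable (by fun_prop)]
    exact hmom_all a b
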